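/- (Monotonicity of the entropy under enlargement of the domain, discrete spins) If the spin set S is finite, 0 ∈ S, and the Hamiltonian family satisfies the null-state property (for Γ ⊂ Γ', configurations on Γ' that vanish on Γ'∖Γ have the same energy as their restriction to Γ), then for any two bounded domains Γ ⊂ Γ' and all E, M, ΔM one has S(E,M,ΔM;Γ) ≤ S(E,M,ΔM;Γ'). -/

import Mathlib

/-! Extending a configuration on `Γ̂` by the null state gives a configuration on `Γ̂'` with the
same magnetization and, by the null-state property, the same energy. So the microstates counted
by `S(E,M,ΔM;Γ)` inject into the finitely many counted by `S(E,M,ΔM;Γ')`. Boundedness of `Γ'`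
is what gives `Γ̂ ⊆ Γ̂'`, since `latticePoints` of a domain with infinitely many lattice points
is `∅`. -/

open MeasureTheory Set Bornology
open scoped Classical

noncomputable section

namespace Stmt4

variable {d : ℕ}

/-- The embedding of a lattice point of `ℤ^d` into `ℝ^d`. -/
def emb (r : Fin d → ℤ) : EuclideanSpace ℝ (Fin d) := WithLp.toLp 2 (fun i => (r i : ℝ))

/-- The set of lattice points `Γ̂ = Γ ∩ ℤ^d` of a (bounded) domain `Γ ⊆ ℝ^d`. -/
def latticePoints (A : Set (EuclideanSpace ℝ (Fin d))) : Finset (Fin d → ℤ) :=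
  if h : {r : Fin d → ℤ | emb r ∈ A}.Finite then h.toFinset else ∅

/-- A spin configuration on `Λ`: values in `S` on `Λ`, null value `0` outside. -/
def IsConfig (S : Finset ℝ) (Λ : Finset (Fin d → ℤ)) (c : (Fin d → ℤ) → ℝ) : Prop :=
  (∀ r ∈ Λ, c r ∈ S) ∧ ∀ r ∉ Λ, c r = 0

/-- Restriction of a configuration to `Λ` (null state outside). -/
def restrict (Λ : Finset (Fin d → ℤ)) (c : (Fin d → ℤ) → ℝ) : (Fin d → ℤ) → ℝ :=
  fun r => if r ∈ Λ then c r else 0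

/-- The microcanonical entropy `S(E, M, ΔM; Γ)`. -/
def entropy (S : Finset ℝ) (Λ : Finset (Fin d → ℤ)) (H : ((Fin d → ℤ) → ℝ) → ℝ)
    (E M ΔM : ℝ) : ℝ :=
  Real.log (Nat.card {c : (Fin d → ℤ) → ℝ //
    IsConfig S Λ c ∧ H c ≤ E ∧ (∑ r ∈ Λ, c r) ∈ Set.Ico M (M + ΔM)})

theorem isBounded_setOf_emb_mem {A : Set (EuclideanSpace ℝ (Fin d))} (hA : IsBounded A) :
    IsBounded {r : Fin d → ℤ | emb r ∈ A} :=
  ((PiLp.antilipschitzWith_toLp 2 _).comp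
    (Isometry.piMap _ fun _ => Real.isometry_intCast).antilipschitz).isBounded_preimage hA

theorem finite_setOf_emb_mem {A : Set (EuclideanSpace ℝ (Fin d))} (hA : IsBounded A) :
    {r : Fin d → ℤ | emb r ∈ A}.Finite :=
  (isBounded_setOf_emb_mem hA).isCompact_closure.finite_of_discrete.subset subset_closure

theorem mem_latticePoints {A : Set (EuclideanSpace ℝ (Fin d))} (hA : IsBounded A)
    {r : Fin d → ℤ} : r ∈ latticePoints A ↔ emb r ∈ A := by
  simp [latticePoints, finite_setOf_emb_mem hA]

theorem latticePoints_mono {A B : Set (EuclideanSpace ℝ (Fin d))} (hB : IsBounded B)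
    (hAB : A ⊆ B) : latticePoints A ⊆ latticePoints B := fun r hr => by
  rw [mem_latticePoints hB]
  rw [mem_latticePoints (hB.subset hAB)] at hr
  exact hAB hr

theorem finite_setOf_isConfig (S : Finset ℝ) (Λ : Finset (Fin d → ℤ)) :
    {c | IsConfig S Λ c}.Finite := by
  refine (Set.finite_range fun (f : Λ → S) r =>
    if h : r ∈ Λ then (f ⟨r, h⟩ : ℝ) else 0).subset ?_
  rintro c ⟨hS, h0⟩
  refine ⟨fun r => ⟨c r, hS r r.2⟩, funext fun r => ?_⟩
  by_cases hr : r ∈ Λ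
  · simp [hr]
  · simp [hr, h0 r hr]

section IsConfig

variable {S : Finset ℝ} {Λ Λ' : Finset (Fin d → ℤ)} {c : (Fin d → ℤ) → ℝ}

theorem IsConfig.mono (hc : IsConfig S Λ c) (h0S : (0 : ℝ) ∈ S) (hΛ : Λ ⊆ Λ') :
    IsConfig S Λ' c :=
  ⟨fun r _ => if hr : r ∈ Λ then hc.1 r hr else hc.2 r hr ▸ h0S,
    fun r hr => hc.2 r fun h => hr (hΛ h)⟩

theorem IsConfig.restrict_eq (hc : IsConfig S Λ c) : restrict Λ c = c :=
  funext fun r => by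
    by_cases hr : r ∈ Λ
    · simp [restrict, hr]
    · simp [restrict, hr, hc.2 r hr]

theorem IsConfig.sum_eq_of_subset (hc : IsConfig S Λ c) (hΛ : Λ ⊆ Λ') :
    ∑ r ∈ Λ', c r = ∑ r ∈ Λ, c r :=
  (Finset.sum_subset hΛ fun r _ hr => hc.2 r hr).symm

end IsConfig

theorem log_natCard_le_of_subset {α : Type*} {s t : Set α} (ht : t.Finite) (hst : s ⊆ t) :
    Real.log (Nat.card s) ≤ Real.log (Nat.card t) := by
  rcases (Nat.card s).eq_zero_or_pos with hs | hs
  · simpa [hs] using Real.log_natCast_nonneg _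
  · exact Real.log_le_log (by exact_mod_cast hs) (by exact_mod_cast Nat.card_mono ht hst)

theorem entropy_monotone_general
    (S : Finset ℝ) (h0S : (0:ℝ) ∈ S)
    (H : Finset (Fin d → ℤ) → ((Fin d → ℤ) → ℝ) → ℝ)
    -- the null-state property: a configuration on `Γ'` vanishing on `Γ'∖Γ` has the same
    -- energy as its restriction to `Γ`
    (hnull : ∀ Λ Λ' : Finset (Fin d → ℤ), Λ ⊆ Λ' → ∀ c : (Fin d → ℤ) → ℝ,
      (∀ r ∈ Λ' \ Λ, c r = 0) → H Λ' c = H Λ (restrict Λ c))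
    (Γ Γ' : Set (EuclideanSpace ℝ (Fin d))) (hΓ'b : IsBounded Γ') (hΓΓ' : Γ ⊆ Γ')
    (E M ΔM : ℝ) :
    entropy S (latticePoints Γ) (H (latticePoints Γ)) E M ΔM ≤
      entropy S (latticePoints Γ') (H (latticePoints Γ')) E M ΔM := by
  have hΛ := latticePoints_mono hΓ'b hΓΓ'
  refine log_natCard_le_of_subset
    ((finite_setOf_isConfig S _).subset fun c hc => hc.1) ?_
  rintro c ⟨hc, hE, hM⟩
  have hvanish : ∀ r ∈ latticePoints Γ' \ latticePoints Γ, c r = 0 :=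
    fun r hr => hc.2 r (Finset.mem_sdiff.1 hr).2
  refine ⟨hc.mono h0S hΛ, ?_, ?_⟩
  · rwa [hnull _ _ hΛ c hvanish, hc.restrict_eq]
  · rwa [hc.sum_eq_of_subset hΛ]

/-- **Monotonicity of the entropy under enlargement of the domain (discrete spins)**:
if `0 ∈ S` and the Hamiltonian family has the null-state property, then for bounded
domains `Γ ⊆ Γ'` the entropy satisfies `S(E,M,ΔM;Γ) ≤ S(E,M,ΔM;Γ')`. -/
theorem entropy_monotone
    (hd : 0 < d)
    (S : Finset ℝ) (h0S : (0:ℝ) ∈ S)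
    (H : Finset (Fin d → ℤ) → ((Fin d → ℤ) → ℝ) → ℝ)
    -- the null-state property: a configuration on `Γ'` vanishing on `Γ'∖Γ` has the same
    -- energy as its restriction to `Γ`
    (hnull : ∀ Λ Λ' : Finset (Fin d → ℤ), Λ ⊆ Λ' → ∀ c : (Fin d → ℤ) → ℝ,
      (∀ r ∈ Λ' \ Λ, c r = 0) → H Λ' c = H Λ (restrict Λ c))
    (Γ Γ' : Set (EuclideanSpace ℝ (Fin d))) (hΓ'b : IsBounded Γ') (hΓΓ' : Γ ⊆ Γ')
    (E M ΔM : ℝ) :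
    entropy S (latticePoints Γ) (H (latticePoints Γ)) E M ΔM ≤
      entropy S (latticePoints Γ') (H (latticePoints Γ')) E M ΔM :=
  entropy_monotone_general S h0S H hnull Γ Γ' hΓ'b hΓΓ' E M ΔM

end Stmt4
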